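/- Let u : ℕ → A be an infinite word and k ≥ 2. Then the sequence PPL_u : ℕ → ℤ is k-regular if and only if the PPL-difference sequence d_u is k-automatic (i.e., the k-kernel of d_u is finite). -/
import Mathlib


/-- Prefix `u[0..n-1]` of the infinite word `u`. -/
def wordPrefix {A : Type*} (u : ℕ → A) (n : ℕ) : List A :=
  List.ofFn (fun i : Fin n => u i)

/-- Factor `u[i..i+ℓ-1]` of the infinite word `u`. -/
def wordFactor {A : Type*} (u : ℕ → A) (i ℓ : ℕ) : List A :=
  List.ofFn (fun j : Fin ℓ => u (i + j))

/-- A palindrome is a word equal to its reversal. -/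
def IsPalindrome {A : Type*} (w : List A) : Prop := w.reverse = w

/-- `w` is a concatenation of `k` nonempty palindromes. -/
def IsPalConcat {A : Type*} (w : List A) (k : ℕ) : Prop :=
  ∃ ps : List (List A), ps.length = k ∧ (∀ p ∈ ps, p ≠ [] ∧ IsPalindrome p) ∧ ps.flatten = w

/-- Prefix palindromic length: the least number of nonempty palindromes whose
concatenation is the prefix of length `n` of `u` (`PPL u 0 = 0`). -/
noncomputable def PPL {A : Type*} (u : ℕ → A) (n : ℕ) : ℕ :=
  sInf {k | IsPalConcat (wordPrefix u n) k}

/-- The PPL-difference sequence `d_u(n) = PPL_u(n+1) - PPL_u(n)`. -/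
noncomputable def PPLdiff {A : Type*} (u : ℕ → A) (n : ℕ) : ℤ :=
  (PPL u (n + 1) : ℤ) - (PPL u n : ℤ)

/-- The `k`-kernel of a sequence `x`: all subsequences `(x (k^e * n + b))_n` with `b < k^e`. -/
def kernelSeq {S : Type*} (k : ℕ) (x : ℕ → S) : Set (ℕ → S) :=
  {y | ∃ e b : ℕ, b < k ^ e ∧ y = fun n => x (k ^ e * n + b)}

namespace PPLAux
open Finset

/-- Coercion of integer sequences to rational sequences, as a ℤ-linear map. -/
def castSeq : (ℕ → ℤ) →ₗ[ℤ] (ℕ → ℚ) where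
  toFun y := fun n => (y n : ℚ)
  map_add' y z := by funext n; push_cast; simp
  map_smul' c y := by funext n; push_cast; simp

lemma castSeq_eq_zero {y : ℕ → ℤ} (h : castSeq y = 0) : y = 0 := by
  funext n
  have := congrFun h n
  simpa [castSeq] using this

/-- Finitely many coordinates separate points of a finite-dimensional
subspace of `ℕ → ℚ`. -/
lemma exists_separating (V : Submodule ℚ (ℕ → ℚ)) [FiniteDimensional ℚ V] :
    ∃ N : Finset ℕ, ∀ v ∈ V, (∀ n ∈ N, v n = 0) → v = 0 := by
  classical
  set Z : Finset ℕ → Submodule ℚ V :=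
    fun N => ⨅ n ∈ N, LinearMap.ker ((LinearMap.proj n).comp V.subtype) with hZ
  have hmem : ∀ (N : Finset ℕ) (v : V), v ∈ Z N ↔ ∀ n ∈ N, (v : ℕ → ℚ) n = 0 := by
    intro N v
    simp [hZ, Submodule.mem_iInf]
  suffices h : ∃ N, Z N = ⊥ by
    obtain ⟨N, hN⟩ := h
    refine ⟨N, fun v hv hz => ?_⟩
    have : (⟨v, hv⟩ : V) ∈ Z N := (hmem N ⟨v, hv⟩).2 hz
    rw [hN, Submodule.mem_bot] at this
    simpa using congrArg Subtype.val this
  -- strong induction on the rank of Z N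
  suffices h : ∀ r (N : Finset ℕ), Module.finrank ℚ (Z N) ≤ r → ∃ N', Z N' = ⊥ by
    exact h (Module.finrank ℚ (Z ∅)) ∅ le_rfl
  intro r
  induction r with
  | zero =>
    intro N hN
    refine ⟨N, ?_⟩
    have : Module.finrank ℚ (Z N) = 0 := Nat.le_zero.mp hN
    exact Submodule.finrank_eq_zero.mp this
  | succ r ih =>
    intro N hN
    by_cases hbot : Z N = ⊥
    · exact ⟨N, hbot⟩
    · obtain ⟨v, hvZ, hv0⟩ := Submodule.exists_mem_ne_zero_of_ne_bot hbot
      have hvne : (v : ℕ → ℚ) ≠ 0 := fun h => hv0 (Subtype.ext h)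
      obtain ⟨n, hn⟩ : ∃ n, (v : ℕ → ℚ) n ≠ 0 := Function.ne_iff.mp hvne
      have hle : Z (insert n N) ≤ Z N := by
        intro w hw
        rw [hmem] at hw ⊢
        intro m hm
        exact hw m (Finset.mem_insert_of_mem hm)
      have hlt : Z (insert n N) < Z N := by
        refine lt_of_le_of_ne hle (fun h => ?_)
        have : v ∈ Z (insert n N) := h ▸ hvZ
        rw [hmem] at this
        exact hn (this n (Finset.mem_insert_self n N))
      have := Submodule.finrank_lt_finrank_of_lt hlt
      exact ih (insert n N) (by omega)

/-- The set of elements of a finitely generated ℤ-submodule of `ℕ → ℤ`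
taking values in a finite set is finite. -/
lemma finite_bounded_of_fg (W : Submodule ℤ (ℕ → ℤ)) (hW : W.FG)
    (F : Set ℤ) (hF : F.Finite) :
    {y : ℕ → ℤ | y ∈ W ∧ ∀ n, y n ∈ F}.Finite := by
  classical
  obtain ⟨s, hs⟩ := hW
  set V : Submodule ℚ (ℕ → ℚ) := Submodule.span ℚ (castSeq '' ↑s) with hV
  haveI : FiniteDimensional ℚ V :=
    FiniteDimensional.span_of_finite ℚ ((s.finite_toSet).image _)
  have hWV : ∀ y ∈ W, castSeq y ∈ V := by
    intro y hy
    have h1 : castSeq y ∈ Submodule.map castSeq W := Submodule.mem_map_of_mem hy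
    rw [← hs, Submodule.map_span] at h1
    have h2 : Submodule.span ℤ (castSeq '' ↑s) ≤ V.restrictScalars ℤ :=
      Submodule.span_le.mpr Submodule.subset_span
    exact h2 h1
  obtain ⟨N, hN⟩ := exists_separating V
  set f : (ℕ → ℤ) → (N → ℤ) := fun y => fun n => y n with hf
  have hinj : Set.InjOn f {y : ℕ → ℤ | y ∈ W ∧ ∀ n, y n ∈ F} := by
    intro y hy y' hy' hff
    have hsub : y - y' ∈ W := W.sub_mem hy.1 hy'.1
    have hz : castSeq (y - y') = 0 := by
      apply hN _ (hWV _ hsub)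
      intro n hn
      have : y n = y' n := congrFun hff ⟨n, hn⟩
      simp [castSeq, this]
    have := castSeq_eq_zero hz
    exact sub_eq_zero.mp this
  have himage : f '' {y : ℕ → ℤ | y ∈ W ∧ ∀ n, y n ∈ F} ⊆
      Set.univ.pi (fun _ : N => F) := by
    rintro g ⟨y, hy, rfl⟩ n _
    exact hy.2 n
  exact Set.Finite.of_finite_image ((Set.Finite.pi fun _ => hF).subset himage) hinj
def shiftL : (ℕ → ℤ) →ₗ[ℤ] (ℕ → ℤ) where
  toFun y := fun n => y (n + 1)
  map_add' _ _ := rfl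
  map_smul' _ _ := rfl

def sumFn (g : ℕ → ℤ) : ℕ → ℤ := fun n => ∑ i ∈ Finset.range n, g i

lemma dir1 (x : ℕ → ℤ) (k : ℕ) (hk : 2 ≤ k)
    (hFG : (Submodule.span ℤ (kernelSeq k x)).FG)
    (F : Set ℤ) (hF : F.Finite) (hdF : ∀ n, x (n + 1) - x n ∈ F) :
    (kernelSeq k (fun n => x (n + 1) - x n)).Finite := by
  classical
  set M := Submodule.span ℤ (kernelSeq k x) with hM
  set W : Submodule ℤ (ℕ → ℤ) := M ⊔ M.map shiftL with hW
  have hWfg : W.FG := Submodule.FG.sup hFG (Submodule.FG.map _ hFG)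
  apply Set.Finite.subset (finite_bounded_of_fg W hWfg F hF)
  rintro y ⟨e, b, hb, rfl⟩
  refine ⟨?_, fun n => hdF _⟩
  -- membership in W
  have h2 : (fun n => x (k ^ e * n + b)) ∈ W := by
    apply Submodule.mem_sup_left
    exact Submodule.subset_span ⟨e, b, hb, rfl⟩
  have h1 : (fun n => x (k ^ e * n + b + 1)) ∈ W := by
    rcases lt_or_eq_of_le (Nat.succ_le_of_lt hb) with h | h
    · apply Submodule.mem_sup_left
      apply Submodule.subset_span
      exact ⟨e, b + 1, h, by funext n; ring_nf⟩
    · apply Submodule.mem_sup_right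
      have hmem : (fun n => x (k ^ e * n + 0)) ∈ M :=
        Submodule.subset_span ⟨e, 0, pow_pos (by omega) e, rfl⟩
      refine Submodule.mem_map.mpr ⟨_, hmem, ?_⟩
      funext n
      show x (k ^ e * (n + 1) + 0) = x (k ^ e * n + b + 1)
      congr 1
      rw [← h]
      simp only [Nat.succ_eq_add_one]
      ring
  have heq : (fun n => x (k ^ e * n + b + 1) - x (k ^ e * n + b)) =
      (fun n => x (k ^ e * n + b + 1)) - (fun n => x (k ^ e * n + b)) := rfl
  exact heq ▸ W.sub_mem h1 h2

lemma dir2 (x d : ℕ → ℤ) (k : ℕ) (hk : 2 ≤ k)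
    (hsum : ∀ m, x m = ∑ i ∈ Finset.range m, d i)
    (hfin : (kernelSeq k d).Finite) :
    (Submodule.span ℤ (kernelSeq k x)).FG := by
  classical
  set K := kernelSeq k d with hK
  set M : Submodule ℤ (ℕ → ℤ) := Submodule.span ℤ (K ∪ sumFn '' K) with hMdef
  have hMfg : M.FG := Submodule.fg_span (hfin.union (hfin.image _))
  have hKT : ∀ g ∈ K, ∀ a < k, (fun n => g (k * n + a)) ∈ K := by
    rintro g ⟨e, b, hb, rfl⟩ a ha
    refine ⟨e + 1, k ^ e * a + b, ?_, ?_⟩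
    · calc k ^ e * a + b < k ^ e * a + k ^ e := by omega
        _ = k ^ e * (a + 1) := by ring
        _ ≤ k ^ e * k := Nat.mul_le_mul_left _ (by omega)
        _ = k ^ (e + 1) := by rw [pow_succ]
    · funext n
      congr 1
      rw [pow_succ]
      ring
  have hsplit : ∀ (g : ℕ → ℤ) (m : ℕ),
      sumFn g (k * m) = ∑ a ∈ Finset.range k, sumFn (fun n => g (k * n + a)) m := by
    intro g m
    induction m with
    | zero => simp [sumFn]
    | succ m ih =>
      have h1 : k * (m + 1) = k * m + k := by ring
      simp only [sumFn] at ih ⊢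
      rw [h1, Finset.sum_range_add, ih, ← Finset.sum_add_distrib]
      exact Finset.sum_congr rfl fun a _ => by rw [Finset.sum_range_succ]
  have hFK : ∀ (e : ℕ), ∀ g ∈ K, (fun n => sumFn g (k ^ e * n)) ∈ M := by
    intro e
    induction e with
    | zero =>
      intro g hg
      have : (fun n => sumFn g (k ^ 0 * n)) = sumFn g := by funext n; simp
      rw [this]
      exact Submodule.subset_span (Or.inr ⟨g, hg, rfl⟩)
    | succ e ih =>
      intro g hg
      have heq : (fun n => sumFn g (k ^ (e + 1) * n)) =
          ∑ a ∈ Finset.range k, (fun n => sumFn (fun m => g (k * m + a)) (k ^ e * n)) := by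
        funext n
        rw [Finset.sum_apply]
        have h2 : k ^ (e + 1) * n = k * (k ^ e * n) := by ring
        rw [h2, hsplit]
      rw [heq]
      exact Submodule.sum_mem _ fun a ha =>
        ih _ (hKT g hg a (Finset.mem_range.mp ha))
  have hdK : d ∈ K := by
    refine ⟨0, 0, by norm_num, ?_⟩
    funext n; simp
  have hker : kernelSeq k x ⊆ M := by
    rintro y ⟨e, b, hb, rfl⟩
    have heq : (fun n => x (k ^ e * n + b)) =
        (fun n => sumFn d (k ^ e * n)) +
          ∑ j ∈ Finset.range b, (fun n => d (k ^ e * n + j)) := by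
      funext n
      rw [Pi.add_apply, Finset.sum_apply, hsum]
      simp only [sumFn]
      rw [Finset.sum_range_add]
    rw [heq]
    refine M.add_mem (hFK e d hdK) (Submodule.sum_mem _ fun j hj => ?_)
    have hjb : j < k ^ e := lt_trans (Finset.mem_range.mp hj) hb
    exact Submodule.subset_span (Or.inl ⟨e, j, hjb, rfl⟩)
  have hle : Submodule.span ℤ (kernelSeq k x) ≤ M := Submodule.span_le.mpr hker
  haveI := isNoetherian_of_fg_of_noetherian M hMfg
  set N := Submodule.span ℤ (kernelSeq k x) with hN
  have hmap : Submodule.map M.subtype (Submodule.comap M.subtype N) = N := by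
    rw [Submodule.map_comap_subtype]
    exact inf_eq_right.mpr hle
  rw [← hmap]
  exact Submodule.FG.map _ (IsNoetherian.noetherian _)
variable {A : Type*} (u : ℕ → A)

lemma wordPrefix_zero : wordPrefix u 0 = [] := by simp [wordPrefix]

lemma wordPrefix_succ (n : ℕ) : wordPrefix u (n + 1) = wordPrefix u n ++ [u n] := by
  rw [wordPrefix, List.ofFn_succ']
  simp [wordPrefix, List.concat_eq_append]

lemma flatten_map_singleton (w : List A) : (w.map fun a => [a]).flatten = w := by
  induction w with
  | nil => simp
  | cons a t ih => simp [ih]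

lemma palconcat_length (w : List A) : IsPalConcat w w.length := by
  refine ⟨w.map fun a => [a], by simp, ?_, flatten_map_singleton w⟩
  intro p hp
  obtain ⟨a, _, rfl⟩ := List.mem_map.mp hp
  exact ⟨by simp, by simp [IsPalindrome]⟩

lemma PPL_nonempty (n : ℕ) : {k | IsPalConcat (wordPrefix u n) k}.Nonempty :=
  ⟨(wordPrefix u n).length, palconcat_length _⟩

lemma PPL_mem (n : ℕ) : IsPalConcat (wordPrefix u n) (PPL u n) :=
  Nat.sInf_mem (PPL_nonempty u n)

lemma PPL_zero : PPL u 0 = 0 := by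
  apply Nat.sInf_eq_zero.mpr
  left
  exact ⟨[], rfl, by simp, by simp [wordPrefix_zero]⟩

lemma PPL_le_succ (n : ℕ) : PPL u (n + 1) ≤ PPL u n + 1 := by
  obtain ⟨ps, hlen, hpal, hflat⟩ := PPL_mem u n
  apply Nat.sInf_le
  refine ⟨ps ++ [[u n]], by simp [hlen], ?_, ?_⟩
  · intro p hp
    rcases List.mem_append.mp hp with h | h
    · exact hpal p h
    · simp only [List.mem_singleton] at h
      subst h
      exact ⟨by simp, by simp [IsPalindrome]⟩
  · rw [List.flatten_append, hflat, wordPrefix_succ]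
    simp

lemma succ_PPL_le (n : ℕ) : PPL u n ≤ PPL u (n + 1) + 1 := by
  obtain ⟨ps, hlen, hpal, hflat⟩ := PPL_mem u (n + 1)
  have hpsne : ps ≠ [] := by
    rintro rfl
    have : wordPrefix u (n + 1) = [] := by simpa using hflat.symm
    rw [wordPrefix_succ] at this
    simp at this
  obtain ⟨qs, p, rfl⟩ : ∃ qs p, ps = qs ++ [p] := by
    rcases List.eq_nil_or_concat ps with h | ⟨L, b, h⟩
    · exact absurd h hpsne
    · exact ⟨L, b, by simpa using h⟩
  have hp := hpal p (by simp)
  obtain ⟨hpne, hppal⟩ := hp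
  obtain ⟨p', c, rfl⟩ : ∃ p' c, p = p' ++ [c] := by
    rcases List.eq_nil_or_concat p with h | ⟨L, b, h⟩
    · exact absurd h hpne
    · exact ⟨L, b, by simpa using h⟩
  have hflat' : qs.flatten ++ (p' ++ [c]) = wordPrefix u n ++ [u n] := by
    rw [← wordPrefix_succ, ← hflat]
    simp
  have hkey : qs.flatten ++ p' = wordPrefix u n := by
    have h3 : (qs.flatten ++ p') ++ [c] = wordPrefix u n ++ [u n] := by
      rw [List.append_assoc]; exact hflat'
    exact (List.append_inj' h3 rfl).1
  have hlen' : qs.length + 1 = PPL u (n + 1) := by simpa using hlen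
  have hqpal : ∀ q ∈ qs, q ≠ [] ∧ IsPalindrome q := fun q hq => hpal q (by simp [hq])
  cases p' with
  | nil =>
    -- p = [c]; prefix n = flatten qs
    apply le_trans (Nat.sInf_le (⟨qs, rfl, hqpal, by simpa using hkey⟩ :
      IsPalConcat (wordPrefix u n) qs.length))
    omega
  | cons a v =>
    -- p = a :: v ++ [c]; palindrome gives c = a and v palindrome
    have hrev : (a :: (v ++ [c])).reverse = a :: (v ++ [c]) := hppal
    rw [List.reverse_cons, List.reverse_append] at hrev
    simp only [List.reverse_singleton, List.singleton_append, List.cons_append] at hrev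
    obtain ⟨hca, htail⟩ := List.cons_eq_cons.mp hrev
    rw [hca] at htail
    have hvrev : v.reverse = v := (List.append_inj' htail rfl).1
    by_cases hv : v = []
    · subst hv
      have hmem : IsPalConcat (wordPrefix u n) (qs.length + 1) := by
        refine ⟨qs ++ [[a]], by simp, ?_, ?_⟩
        · intro q hq
          rcases List.mem_append.mp hq with h | h
          · exact hqpal q h
          · simp only [List.mem_singleton] at h
            subst h
            exact ⟨by simp, by simp [IsPalindrome]⟩
        · rw [List.flatten_append, ← hkey]
          simp
      exact le_trans (Nat.sInf_le hmem) (by omega)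
    · have hmem : IsPalConcat (wordPrefix u n) (qs.length + 2) := by
        refine ⟨qs ++ [[a], v], by simp, ?_, ?_⟩
        · intro q hq
          rcases List.mem_append.mp hq with h | h
          · exact hqpal q h
          · simp only [List.mem_cons, List.mem_singleton] at h
            rcases h with h | h
            · subst h; exact ⟨by simp, by simp [IsPalindrome]⟩
            · rcases h with h | h
              · subst h; exact ⟨hv, hvrev⟩
              · simp at h
        · rw [List.flatten_append, ← hkey]
          simp
      exact le_trans (Nat.sInf_le hmem) (by omega)

lemma PPLdiff_mem_Icc (n : ℕ) : PPLdiff u n ∈ Set.Icc (-1 : ℤ) 1 := by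
  have h1 := PPL_le_succ u n
  have h2 := succ_PPL_le u n
  simp only [PPLdiff, Set.mem_Icc]
  omega

lemma PPL_sum (m : ℕ) : (PPL u m : ℤ) = ∑ i ∈ Finset.range m, PPLdiff u i := by
  have h := Finset.sum_range_sub (fun i => (PPL u i : ℤ)) m
  simp only [PPL_zero, Nat.cast_zero, sub_zero] at h
  rw [show (∑ i ∈ Finset.range m, PPLdiff u i) =
    ∑ i ∈ Finset.range m, ((PPL u (i + 1) : ℤ) - (PPL u i : ℤ)) from rfl, h]

end PPLAux
/-- For `k ≥ 2`, the sequence `PPL_u : ℕ → ℤ` is `k`-regular (the ℤ-submodule of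
`ℕ → ℤ` spanned by its `k`-kernel is finitely generated) if and only if the
PPL-difference sequence `d_u` is `k`-automatic (its `k`-kernel is finite). -/

theorem ppl_regular_iff_diff_automatic {A : Type*} (u : ℕ → A) (k : ℕ) (hk : 2 ≤ k) :
    (Submodule.span ℤ (kernelSeq k (fun n => (PPL u n : ℤ)))).FG ↔
      (kernelSeq k (PPLdiff u)).Finite := by
  constructor
  · intro hFG
    have h := PPLAux.dir1 (fun n => (PPL u n : ℤ)) k hk hFG
      (Set.Icc (-1 : ℤ) 1) (Set.finite_Icc _ _)
      (fun n => PPLAux.PPLdiff_mem_Icc u n)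
    exact h
  · intro hfin
    exact PPLAux.dir2 _ (PPLdiff u) k hk (PPLAux.PPL_sum u) hfin
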